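/- arXiv:2109.11549 — 3 statements merged into one kernel-verified Lean document; each statement's English description precedes it below -/
import Mathlib

section
/- Suppose N = 2, with unit vectors ψ_0, ψ_1 ∈ ℂ² and 2×2 unitary matrices U_0, U_1 satisfying U_0 ψ_0 = e_0 and U_1 ψ_1 = e_1. Then for every n ≥ 0, the average error probability after n iterations is exactly p_e^{(n)} = |⟨ψ_0, ψ_1⟩|^{2n} · (p_0 · Re(ω_{1,1}) + p_1 · Re(ω_{0,0})). In particular, the error probability decays exponentially at the rate −ln |⟨ψ_0, ψ_1⟩|², which is the Chernoff exponent for discriminating the pure states ψ_0 and ψ_1. -/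
open Matrix ComplexOrder

private lemma iter_diag {g : Matrix (Fin 2) (Fin 2) ℂ → Matrix (Fin 2) (Fin 2) ℂ}
    {t : ℂ} {i : Fin 2} (h : ∀ σ, g σ i i = t * σ i i) (σ : Matrix (Fin 2) (Fin 2) ℂ)
    (n : ℕ) : (g^[n] σ) i i = t ^ n * σ i i := by
  induction n with
  | zero => simp
  | succ n ih => rw [Function.iterate_succ_apply', h, ih]; ring

private lemma unitary_dot {U : Matrix (Fin 2) (Fin 2) ℂ}
    (hU : U ∈ Matrix.unitaryGroup (Fin 2) ℂ) (x y : Fin 2 → ℂ) :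
    star (U.mulVec x) ⬝ᵥ (U.mulVec y) = star x ⬝ᵥ y := by
  have h1 : star U * U = 1 := hU.1
  rw [Matrix.star_mulVec, ← Matrix.dotProduct_mulVec, Matrix.mulVec_mulVec,
    Matrix.star_eq_conjTranspose] at *
  rw [show Uᴴ * U = 1 from h1, Matrix.one_mulVec]

/-- For `N = 2`, with `U_0 ψ_0 = e_0` and `U_1 ψ_1 = e_1`, the
average error probability after `n` iterations is exactly
`p_e^{(n)} = |⟨ψ_0, ψ_1⟩|^{2n} (p_0 Re(ω_{1,1}) + p_1 Re(ω_{0,0}))`. -/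
theorem stmt11
    (ψ : Fin 2 → (Fin 2 → ℂ)) (hψ : ∀ i, ∑ a, Complex.normSq (ψ i a) = 1)
    (U : Fin 2 → Matrix (Fin 2) (Fin 2) ℂ)
    (hU : ∀ k, U k ∈ Matrix.unitaryGroup (Fin 2) ℂ)
    (hU0 : (U 0).mulVec (ψ 0) = Pi.single 0 1)
    (hU1 : (U 1).mulVec (ψ 1) = Pi.single 1 1)
    (p : Fin 2 → ℝ) (hp : ∀ k, 0 ≤ p k) (hpsum : ∑ k, p k = 1)
    (ω : Matrix (Fin 2) (Fin 2) ℂ) (hω : ω.PosSemidef) (hωtr : ω.trace = 1)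
    (n : ℕ) :
    ∑ k, p k * ∑ j ∈ Finset.univ.filter (fun j => j ≠ k),
        (((fun σ : Matrix (Fin 2) (Fin 2) ℂ =>
            ∑ l, σ l l • vecMulVec ((U l).mulVec (ψ k)) (star ((U l).mulVec (ψ k))))^[n] ω)
          j j).re
      = ‖star (ψ 0) ⬝ᵥ ψ 1‖ ^ (2 * n)
          * (p 0 * (ω 1 1).re + p 1 * (ω 0 0).re) := by
  set s : ℂ := star (ψ 0) ⬝ᵥ ψ 1 with hs
  set a : ℂ := ((U 1).mulVec (ψ 0)) 1 with ha
  set b : ℂ := ((U 0).mulVec (ψ 1)) 0 with hb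
  -- identify a and b with inner products
  have hae : a = star (ψ 1) ⬝ᵥ ψ 0 := by
    rw [ha, ← unitary_dot (hU 1) (ψ 1) (ψ 0), hU1]
    simp [dotProduct]
  have hbe : b = s := by
    rw [hb, hs, ← unitary_dot (hU 0) (ψ 0) (ψ 1), hU0]
    simp [dotProduct]
  have hna : Complex.normSq a = Complex.normSq s := by
    rw [hae, hs]
    have h : star (ψ 1) ⬝ᵥ ψ 0 = star (star (ψ 0) ⬝ᵥ ψ 1) := by
      rw [Matrix.star_dotProduct]
    rw [h]
    simpa using Complex.normSq_conj (star (ψ 0) ⬝ᵥ ψ 1)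
  have hnb : Complex.normSq b = Complex.normSq s := by rw [hbe]
  -- diagonal action
  have h0 : ∀ σ : Matrix (Fin 2) (Fin 2) ℂ,
      (∑ l, σ l l • vecMulVec ((U l).mulVec (ψ 0)) (star ((U l).mulVec (ψ 0)))) 1 1
        = (Complex.normSq s : ℂ) * σ 1 1 := by
    intro σ
    simp only [Matrix.sum_apply, Fin.sum_univ_two, Matrix.smul_apply, Matrix.vecMulVec_apply,
      hU0, Pi.star_apply, smul_eq_mul]
    rw [← ha]
    simp [Pi.single_apply]
    rw [Complex.mul_conj, hna]; ring
  have h1 : ∀ σ : Matrix (Fin 2) (Fin 2) ℂ,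
      (∑ l, σ l l • vecMulVec ((U l).mulVec (ψ 1)) (star ((U l).mulVec (ψ 1)))) 0 0
        = (Complex.normSq s : ℂ) * σ 0 0 := by
    intro σ
    simp only [Matrix.sum_apply, Fin.sum_univ_two, Matrix.smul_apply, Matrix.vecMulVec_apply,
      hU1, Pi.star_apply, smul_eq_mul]
    rw [← hb]
    simp [Pi.single_apply]
    rw [Complex.mul_conj, hnb]; ring
  have H0 := iter_diag h0 ω n
  have H1 := iter_diag h1 ω n
  have hfilter0 : Finset.univ.filter (fun j : Fin 2 => j ≠ (0 : Fin 2)) = {1} := by decide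
  have hfilter1 : Finset.univ.filter (fun j : Fin 2 => j ≠ (1 : Fin 2)) = {0} := by decide
  rw [Fin.sum_univ_two, hfilter0, hfilter1, Finset.sum_singleton, Finset.sum_singleton,
    H0, H1]
  have habs : ‖s‖ ^ (2 * n) = Complex.normSq s ^ n := by
    rw [pow_mul, Complex.sq_norm]
  rw [habs]
  have : ∀ z : ℂ, ((Complex.normSq s : ℂ) ^ n * z).re = Complex.normSq s ^ n * z.re := by
    intro z
    rw [← Complex.ofReal_pow, Complex.re_ofReal_mul]
  rw [this, this]
  ring
end

section
/- Fix a ∈ {0, …, N−1} and assume |⟨ψ_j, ψ_a⟩| < 1 for every j ≠ a. Let w_k = V_k ψ_a = ⟨ψ_k, ψ_a⟩ e_k + ⟨ψ_k^⊥, ψ_a⟩ e_{k⊕1} ∈ ℂ^N for each k. If σ is an N×N positive semidefinite complex matrix with trace 1 satisfying the self-consistency condition σ = ∑_{k=0}^{N−1} σ_{k,k} · w_k w_k†, then σ = e_a e_a†. That is, e_a e_a† is the unique fixed point of the induced channel when the chronology-respecting input state is ψ_a. -/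
open Matrix ComplexOrder


lemma aux_unit (u : Fin 2 → ℂ) (h : ∑ a, Complex.normSq (u a) = 1) :
    star u ⬝ᵥ u = 1 := by
  have : star u ⬝ᵥ u = ((∑ a, Complex.normSq (u a) : ℝ) : ℂ) := by
    push_cast
    simp [dotProduct, Complex.normSq_eq_conj_mul_self]
  rw [this, h, Complex.ofReal_one]

lemma aux_complete (u v : Fin 2 → ℂ)
    (hu : star u ⬝ᵥ u = 1) (hv : star v ⬝ᵥ v = 1) (huv : star u ⬝ᵥ v = 0) :
    ∀ i j : Fin 2, u i * (starRingEnd ℂ) (u j) + v i * (starRingEnd ℂ) (v j)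
      = if i = j then 1 else 0 := by
  have hvu : star v ⬝ᵥ u = 0 := by rw [star_dotProduct, huv, star_zero]
  set M : Matrix (Fin 2) (Fin 2) ℂ := Matrix.of ![star u, star v] with hM
  simp only [dotProduct, Fin.sum_univ_two, Pi.star_apply, RCLike.star_def] at hu hv huv hvu
  have h1 : M * Mᴴ = 1 := by
    ext i j
    fin_cases i <;> fin_cases j <;>
      simp [hM, Matrix.mul_apply, Matrix.conjTranspose_apply, Fin.sum_univ_two,
        Matrix.one_apply]
    · linear_combination hu
    · linear_combination huv
    · linear_combination hvu
    · linear_combination hv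
  have h2 : Mᴴ * M = 1 := mul_eq_one_comm.mp h1
  intro i j
  have e : (Mᴴ * M) i j = (1 : Matrix (Fin 2) (Fin 2) ℂ) i j := by rw [h2]
  simpa [hM, Matrix.mul_apply, Matrix.conjTranspose_apply, Fin.sum_univ_two,
    Matrix.one_apply] using e

lemma aux_key (u v x : Fin 2 → ℂ)
    (hu : star u ⬝ᵥ u = 1) (hv : star v ⬝ᵥ v = 1) (huv : star u ⬝ᵥ v = 0)
    (hx : star x ⬝ᵥ x = 1) :
    (star u ⬝ᵥ x) * (starRingEnd ℂ) (star u ⬝ᵥ x)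
      + (star v ⬝ᵥ x) * (starRingEnd ℂ) (star v ⬝ᵥ x) = 1 := by
  have C := aux_complete u v hu hv huv
  have C00 := C 0 0
  have C01 := C 0 1
  have C10 := C 1 0
  have C11 := C 1 1
  simp only [if_pos rfl, if_true] at C00 C11
  rw [if_neg (by decide)] at C01
  rw [if_neg (by decide)] at C10
  simp only [dotProduct, Fin.sum_univ_two, Pi.star_apply, RCLike.star_def, map_add,
    _root_.map_mul, Complex.conj_conj, if_true] at hx ⊢
  linear_combination (x 0 * (starRingEnd ℂ) (x 0)) * C00
    + (x 0 * (starRingEnd ℂ) (x 1)) * C10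
    + (x 1 * (starRingEnd ℂ) (x 0)) * C01
    + (x 1 * (starRingEnd ℂ) (x 1)) * C11 + hx

/-- Fix `a` and assume `|⟨ψ_j, ψ_a⟩| < 1` for all `j ≠ a`.  With
`w_k = V_k ψ_a = ⟨ψ_k, ψ_a⟩ e_k + ⟨ψ_k^⊥, ψ_a⟩ e_{k⊕1}`, if `σ` is a positive
semidefinite trace-one matrix satisfying the self-consistency condition
`σ = ∑_k σ_{k,k} w_k w_k†`, then `σ = e_a e_a†`: the fixed point is unique.
(Here `N = m + 1 ≥ 3`.) -/
theorem stmt15 (m : ℕ) (hm : 2 ≤ m)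
    (ψ ψperp : Fin (m + 1) → (Fin 2 → ℂ))
    (hψ : ∀ i, ∑ a, Complex.normSq (ψ i a) = 1)
    (hψperp : ∀ i, ∑ a, Complex.normSq (ψperp i a) = 1)
    (horth : ∀ i, star (ψ i) ⬝ᵥ ψperp i = 0)
    (a : Fin (m + 1))
    (hover : ∀ j, j ≠ a → ‖star (ψ j) ⬝ᵥ ψ a‖ < 1)
    (σ : Matrix (Fin (m + 1)) (Fin (m + 1)) ℂ)
    (hσ : σ.PosSemidef) (hσtr : σ.trace = 1)
    (w : Fin (m + 1) → Fin (m + 1) → ℂ)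
    (hw : ∀ k c, w k c = (if c = k then star (ψ k) ⬝ᵥ ψ a else 0)
        + (if c = k + 1 then star (ψperp k) ⬝ᵥ ψ a else 0))
    (hfix : σ = ∑ k, σ k k • vecMulVec (w k) (star (w k))) :
    σ = Matrix.single a a 1 := by
  classical
  have hone : (1 : Fin (m+1)).val = 1 := by
    rw [Fin.val_one']; exact Nat.mod_eq_of_lt (by omega)
  have h10 : (1 : Fin (m+1)) ≠ 0 := by
    intro h
    have := congrArg Fin.val h
    rw [hone] at this
    simp at this
  set α : Fin (m+1) → ℂ := fun k => star (ψ k) ⬝ᵥ ψ a with hα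
  set β : Fin (m+1) → ℂ := fun k => star (ψperp k) ⬝ᵥ ψ a with hβ
  have hunit : ∀ i, star (ψ i) ⬝ᵥ ψ i = 1 := fun i => aux_unit _ (hψ i)
  have hunitp : ∀ i, star (ψperp i) ⬝ᵥ ψperp i = 1 := fun i => aux_unit _ (hψperp i)
  have hkey : ∀ k, α k * (starRingEnd ℂ) (α k) + β k * (starRingEnd ℂ) (β k) = 1 :=
    fun k => aux_key _ _ _ (hunit k) (hunitp k) (horth k) (hunit a)
  have hαa : α a = 1 := hunit a
  have hβa : β a = 0 := by
    show star (ψperp a) ⬝ᵥ ψ a = 0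
    rw [star_dotProduct, horth a, star_zero]
  have hwk : ∀ k, w k k = α k := by
    intro k
    rw [hw, if_pos rfl, if_neg (by simp [left_eq_add, h10]), add_zero]
  have hwk1 : ∀ k, w k (k + 1) = β k := by
    intro k
    rw [hw, if_neg (by simp [add_eq_left, h10]), if_pos rfl, zero_add]
  have hw0 : ∀ k c, c ≠ k → c ≠ k + 1 → w k c = 0 := by
    intro k c h1 h2
    rw [hw, if_neg h1, if_neg h2, add_zero]
  -- diagonal recursion
  have hdiag : ∀ c, σ c c = σ c c * (α c * (starRingEnd ℂ) (α c))
      + σ (c-1) (c-1) * (β (c-1) * (starRingEnd ℂ) (β (c-1))) := by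
    intro c
    have hcc : c ≠ c - 1 := by
      intro h
      exact h10 (sub_eq_self.mp h.symm)
    have hc1 : w (c-1) c = β (c-1) := by
      have := hwk1 (c-1); rwa [sub_add_cancel] at this
    calc σ c c = ∑ k, σ k k * (w k c * (starRingEnd ℂ) (w k c)) := by
          conv_lhs => rw [hfix]
          rw [Matrix.sum_apply]
          refine Finset.sum_congr rfl fun k _ => ?_
          simp [Matrix.smul_apply, Matrix.vecMulVec_apply, Pi.star_apply,
            RCLike.star_def, smul_eq_mul]
      _ = ∑ k ∈ ({c, c-1} : Finset (Fin (m+1))),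
            σ k k * (w k c * (starRingEnd ℂ) (w k c)) := by
          refine (Finset.sum_subset (Finset.subset_univ _) fun k _ hk => ?_).symm
          simp only [Finset.mem_insert, Finset.mem_singleton, not_or] at hk
          have hz : w k c = 0 := by
            refine hw0 k c (fun h => hk.1 h.symm) fun h => hk.2 ?_
            rw [h, add_sub_cancel_right]
          rw [hz]
          ring
      _ = σ c c * (w c c * (starRingEnd ℂ) (w c c))
            + σ (c-1) (c-1) * (w (c-1) c * (starRingEnd ℂ) (w (c-1) c)) :=
          Finset.sum_pair hcc
      _ = _ := by rw [hwk, hc1]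
  -- q is constant around the cycle, and zero at a
  set q : Fin (m+1) → ℂ := fun c => σ c c * (1 - α c * (starRingEnd ℂ) (α c)) with hq
  have hrec : ∀ c, q c = q (c - 1) := by
    intro c
    have h := hdiag c
    have hk := hkey (c-1)
    simp only [hq]
    linear_combination h + σ (c-1) (c-1) * hk
  have hqa : q a = 0 := by simp [hq, hαa]
  have hrec' : ∀ d, q (d + 1) = q d := by
    intro d
    have := hrec (d + 1)
    rwa [add_sub_cancel_right] at this
  open Fin.NatCast in
  have hqall : ∀ n : ℕ, q (a + n) = 0 := by
    intro n
    induction n with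
    | zero => simpa using hqa
    | succ k ih =>
        have : a + ((k : Fin (m+1)) + 1) = (a + k) + 1 := (add_assoc _ _ _).symm
        rw [Nat.cast_add, Nat.cast_one, this, hrec', ih]
  open Fin.NatCast in
  have hq0 : ∀ c, q c = 0 := by
    intro c
    have := hqall ((c - a).val)
    rwa [Fin.cast_val_eq_self, add_sub_cancel] at this
  -- off-diagonal diagonal entries vanish
  have hp0 : ∀ c, c ≠ a → σ c c = 0 := by
    intro c hc
    have h1 := hq0 c
    have hT : (1 : ℂ) - α c * (starRingEnd ℂ) (α c) ≠ 0 := by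
      rw [Complex.mul_conj]
      intro h
      have h2 : Complex.normSq (α c) < 1 := by
        have h3 := hover c hc
        have h4 := norm_nonneg (α c)
        rw [Complex.normSq_eq_norm_sq]
        nlinarith
      have h5 : ((Complex.normSq (α c) : ℂ)) = 1 := by linear_combination -h
      rw [show (1 : ℂ) = ((1 : ℝ) : ℂ) by norm_num, Complex.ofReal_inj] at h5
      linarith
    exact (mul_eq_zero.mp h1).resolve_right hT
  have hpa : σ a a = 1 := by
    have ht : ∑ k, σ k k = 1 := by simpa [Matrix.trace, Matrix.diag] using hσtr
    rwa [Finset.sum_eq_single a (fun b _ hb => hp0 b hb) (by simp)] at ht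
  -- conclude
  have hx1 : star (ψ a) ⬝ᵥ ψ a = 1 := hαa
  have hx2 : star (ψperp a) ⬝ᵥ ψ a = 0 := hβa
  have hwa : w a = fun c => if c = a then 1 else 0 := by
    funext c
    rw [hw]
    simp only [hx1, hx2]
    by_cases h : c = a <;> simp [h]
  rw [hfix, Finset.sum_eq_single a (fun b _ hb => by rw [hp0 b hb, zero_smul]) (by simp),
    hpa, one_smul, hwa]
  ext b c
  simp only [Matrix.vecMulVec_apply, Pi.star_apply, Matrix.single, Matrix.of_apply]
  by_cases hb : b = a <;> by_cases hc : c = a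
  · simp [hb, hc]
  · simp [hb, hc, Ne.symm hc]
  · simp [hb, hc, Ne.symm hb]
  · simp [hb, hc, Ne.symm hb, Ne.symm hc]
end

section
/- Identify ℂ⁴ with ℂ² ⊗ ℂ² via e_0 = |00⟩, e_1 = |01⟩, e_2 = |10⟩, e_3 = |11⟩. Let ψ_0 = |00⟩, ψ_1 = |10⟩, ψ_2 = |+⟩⊗|0⟩, ψ_3 = |−⟩⊗|0⟩, where |±⟩ = (|0⟩ ± |1⟩)/√2, and let U_0 = SWAP, U_1 = X ⊗ X, U_2 = (X ⊗ I)(H ⊗ I), U_3 = (X ⊗ H)·SWAP, where X is the 2×2 Pauli-X matrix, H is the 2×2 Hadamard matrix, I is the 2×2 identity, and SWAP is the two-qubit swap matrix. Then: (1) U_i ψ_i = e_i for each i ∈ {0,1,2,3}; and (2) defining (P_k)_{i,j} = |(U_j ψ_k)_i|² and Q_k as the 3×3 matrix obtained from P_k by deleting its k-th row and column, the spectral radius of Q_k equals 1/2 for every k ∈ {0,1,2,3}. Hence the scheme for discriminating the BB84 states has error exponent at least ln 2, saturating the multiple Chernoff bound since max_{i≠j} |⟨ψ_i, ψ_j⟩|²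 = 1/2. -/
open Matrix Kronecker

/-- The spectral radius of a complex square matrix: the maximum modulus of its
complex eigenvalues (i.e. of its spectrum). -/
noncomputable def specRad {m : Type*} [Fintype m] [DecidableEq m]
    (M : Matrix m m ℂ) : ℝ :=
  sSup ((fun z : ℂ => ‖z‖) '' spectrum ℂ M)

/-- The identification of `ℂ² ⊗ ℂ²` with `ℂ⁴`: `(i, j) ↔ 2 i + j`. -/
def pairEquiv : Fin 2 × Fin 2 ≃ Fin 4 where
  toFun p := ⟨2 * p.1.val + p.2.val, by have := p.1.isLt; have := p.2.isLt; omega⟩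
  invFun q := (⟨q.val / 2, by have := q.isLt; omega⟩, ⟨q.val % 2, by omega⟩)
  left_inv := by decide
  right_inv := by decide

/-- The `4 × 4` matrix corresponding to `A ⊗ B` under the identification. -/
def kron4 (A B : Matrix (Fin 2) (Fin 2) ℂ) : Matrix (Fin 4) (Fin 4) ℂ :=
  Matrix.reindex pairEquiv pairEquiv (A ⊗ₖ B)

/-- The vector of `ℂ⁴` corresponding to `a ⊗ b` under the identification. -/
def vKron (a b : Fin 2 → ℂ) : Fin 4 → ℂ :=
  fun q => a (pairEquiv.symm q).1 * b (pairEquiv.symm q).2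

/-- The two-qubit SWAP matrix. -/
def SWAP4 : Matrix (Fin 4) (Fin 4) ℂ :=
  Matrix.reindex pairEquiv pairEquiv
    (Matrix.of fun p q : Fin 2 × Fin 2 => if p.1 = q.2 ∧ p.2 = q.1 then 1 else 0)

/-- Pauli X. -/
def X2 : Matrix (Fin 2) (Fin 2) ℂ := !![0, 1; 1, 0]

/-- Hadamard. -/
noncomputable def H2 : Matrix (Fin 2) (Fin 2) ℂ :=
  ((Real.sqrt 2 : ℂ))⁻¹ • !![1, 1; 1, -1]

/-- The BB84 states (with an appended ancilla `|0⟩`):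
`|00⟩, |10⟩, |+0⟩, |−0⟩`. -/
noncomputable def ψB : Fin 4 → (Fin 4 → ℂ) :=
  ![vKron ![1, 0] ![1, 0],
    vKron ![0, 1] ![1, 0],
    vKron (((Real.sqrt 2 : ℂ))⁻¹ • ![1, 1]) ![1, 0],
    vKron (((Real.sqrt 2 : ℂ))⁻¹ • ![1, -1]) ![1, 0]]

/-- The unitaries `U_0 = SWAP`, `U_1 = X ⊗ X`, `U_2 = (X ⊗ I)(H ⊗ I)`,
`U_3 = (X ⊗ H)·SWAP`. -/
noncomputable def UB : Fin 4 → Matrix (Fin 4) (Fin 4) ℂ :=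
  ![SWAP4,
    kron4 X2 X2,
    kron4 X2 1 * kron4 H2 1,
    kron4 X2 H2 * SWAP4]

lemma pe0 : pairEquiv.symm 0 = (0,0) := rfl
lemma pe1 : pairEquiv.symm 1 = (0,1) := rfl
lemma pe2 : pairEquiv.symm 2 = (1,0) := rfl
lemma pe3 : pairEquiv.symm 3 = (1,1) := rfl
noncomputable def sc : ℂ := ((Real.sqrt 2 : ℂ))⁻¹

/-- Table of the vectors `U_j ψ_k`: `VT k j = (UB j).mulVec (ψB k)`. -/
noncomputable def VT : Fin 4 → Fin 4 → (Fin 4 → ℂ) :=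
  ![![![1,0,0,0], ![0,0,0,1], ![sc,0,sc,0], ![0,0,sc,sc]],
    ![![0,1,0,0], ![0,1,0,0], ![-sc,0,sc,0], ![0,0,sc,-sc]],
    ![![sc,sc,0,0], ![0,sc,0,sc], ![0,0,1,0], ![0,0,1,0]],
    ![![sc,-sc,0,0], ![0,-sc,0,sc], ![1,0,0,0], ![0,0,0,1]]]

lemma sc_sq : sc ^ 2 = 1 / 2 := by
  rw [sc, ← Complex.ofReal_inv, ← Complex.ofReal_pow]
  norm_num [Real.sq_sqrt]

lemma SWAP4_eq : SWAP4 = !![1,0,0,0;0,0,1,0;0,1,0,0;0,0,0,1] := by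
  ext i j
  fin_cases i <;> fin_cases j <;> simp [SWAP4, pe0, pe1, pe2, pe3, Matrix.vecHead, Matrix.vecTail] <;> norm_num

lemma kXX : kron4 X2 X2 = !![0,0,0,1;0,0,1,0;0,1,0,0;1,0,0,0] := by
  ext i j
  fin_cases i <;> fin_cases j <;> simp [kron4, X2, pe0, pe1, pe2, pe3, Matrix.vecHead, Matrix.vecTail]

lemma kXI : kron4 X2 1 = !![0,0,1,0;0,0,0,1;1,0,0,0;0,1,0,0] := by
  ext i j
  fin_cases i <;> fin_cases j <;>
    simp [kron4, X2, pe0, pe1, pe2, pe3, Matrix.one_apply, Matrix.vecHead, Matrix.vecTail]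

lemma kHI : kron4 H2 1 = sc • !![1,0,1,0;0,1,0,1;1,0,-1,0;0,1,0,-1] := by
  ext i j
  fin_cases i <;> fin_cases j <;>
    simp [kron4, H2, sc, pe0, pe1, pe2, pe3, Matrix.one_apply, Matrix.vecHead, Matrix.vecTail]

lemma kXH : kron4 X2 H2 = sc • !![0,0,1,1;0,0,1,-1;1,1,0,0;1,-1,0,0] := by
  ext i j
  fin_cases i <;> fin_cases j <;>
    simp [kron4, X2, H2, sc, pe0, pe1, pe2, pe3, Matrix.vecHead, Matrix.vecTail]

lemma ψB0 : ψB 0 = ![1,0,0,0] := by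
  funext q; fin_cases q <;> simp [ψB, vKron, pe0, pe1, pe2, pe3, Matrix.vecHead, Matrix.vecTail]
lemma ψB1 : ψB 1 = ![0,0,1,0] := by
  funext q; fin_cases q <;> simp [ψB, vKron, pe0, pe1, pe2, pe3, Matrix.vecHead, Matrix.vecTail]
lemma ψB2 : ψB 2 = ![sc,0,sc,0] := by
  funext q; fin_cases q <;> simp [ψB, vKron, sc, pe0, pe1, pe2, pe3, Matrix.vecHead, Matrix.vecTail]
lemma ψB3 : ψB 3 = ![sc,0,-sc,0] := by
  funext q; fin_cases q <;> simp [ψB, vKron, sc, pe0, pe1, pe2, pe3, Matrix.vecHead, Matrix.vecTail]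

lemma UB0eq : UB 0 = !![1,0,0,0;0,0,1,0;0,1,0,0;0,0,0,1] := SWAP4_eq

lemma UB1eq : UB 1 = !![0,0,0,1;0,0,1,0;0,1,0,0;1,0,0,0] := kXX

lemma UB2eq : UB 2 = sc • !![1,0,-1,0;0,1,0,-1;1,0,1,0;0,1,0,1] := by
  show kron4 X2 1 * kron4 H2 1 = _
  rw [kXI, kHI, Matrix.mul_smul]
  congr 1
  ext i j
  fin_cases i <;> fin_cases j <;>
    simp [Matrix.mul_apply, Fin.sum_univ_four, Matrix.vecHead, Matrix.vecTail]

lemma UB3eq : UB 3 = sc • !![0,1,0,1;0,1,0,-1;1,0,1,0;1,0,-1,0] := by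
  show kron4 X2 H2 * SWAP4 = _
  rw [kXH, SWAP4_eq, Matrix.smul_mul]
  congr 1
  ext i j
  fin_cases i <;> fin_cases j <;>
    simp [Matrix.mul_apply, Fin.sum_univ_four, Matrix.vecHead, Matrix.vecTail]

lemma keyVT : ∀ k j : Fin 4, (UB j).mulVec (ψB k) = VT k j := by
  intro k j
  fin_cases k <;> fin_cases j <;> funext i <;> fin_cases i <;>
    simp [UB0eq, UB1eq, UB2eq, UB3eq, ψB0, ψB1, ψB2, ψB3, VT,
      Matrix.mulVec, dotProduct, Fin.sum_univ_four,
      Matrix.vecHead, Matrix.vecTail] <;>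
    linear_combination (2:ℂ) * sc_sq

lemma habs_sc : ‖sc‖ ^ 2 = 1 / 2 := by
  rw [sc, norm_inv, Complex.norm_real, Real.norm_of_nonneg (Real.sqrt_nonneg 2),
    inv_pow, Real.sq_sqrt (by norm_num)]
  norm_num

lemma abs_half : ‖(1 / 2 : ℂ)‖ = 1 / 2 := by
  rw [norm_div, Complex.norm_two, norm_one]

lemma specRad_half (Q : Matrix (Fin 3) (Fin 3) ℂ)
    (h : ∀ a : ℂ, (a • (1 : Matrix (Fin 3) (Fin 3) ℂ) - Q).det = a * (a - 1/2)^2) :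
    specRad Q = 1 / 2 := by
  have hspec : spectrum ℂ Q = {0, 1/2} := by
    ext a
    rw [spectrum.mem_iff, Matrix.isUnit_iff_isUnit_det, isUnit_iff_ne_zero, not_not,
      Algebra.algebraMap_eq_smul_one, h]
    simp [mul_eq_zero, pow_eq_zero_iff, sub_eq_zero]
  rw [specRad, hspec]
  have himg : (fun z : ℂ => ‖z‖) '' {0, 1/2} = {(0:ℝ), 1/2} := by
    simp only [Set.image_insert_eq, Set.image_singleton, norm_zero, abs_half]
  rw [himg, csSup_pair]
  norm_num

lemma fv2 : ((2:Fin 4):ℕ) = 2 := rfl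
lemma fv3 : ((3:Fin 4):ℕ) = 3 := rfl

lemma cs0 : Fin.castSucc (0:Fin 3) = (0:Fin 4) := rfl
lemma cs1 : Fin.castSucc (1:Fin 3) = (1:Fin 4) := rfl
lemma cs2 : Fin.castSucc (2:Fin 3) = (2:Fin 4) := rfl

lemma qcase (k : Fin 4) (Q : Matrix (Fin 3) (Fin 3) ℂ)
    (hM : (((Matrix.of fun i j : Fin 4 =>
          ‖((UB j).mulVec (ψB k)) i‖ ^ 2
          : Matrix (Fin 4) (Fin 4) ℝ).submatrix
        k.succAbove k.succAbove).map Complex.ofReal) = Q)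
    (h : ∀ a : ℂ, (a • (1 : Matrix (Fin 3) (Fin 3) ℂ) - Q).det = a * (a - 1/2)^2) :
    specRad
        (((Matrix.of fun i j : Fin 4 => ‖((UB j).mulVec (ψB k)) i‖ ^ 2
            : Matrix (Fin 4) (Fin 4) ℝ).submatrix
          k.succAbove k.succAbove).map Complex.ofReal) = 1 / 2 := by
  rw [hM]; exact specRad_half Q h

/-- For the BB84 states and the unitaries above:
(1) `U_i ψ_i = e_i` for each `i`; and (2) the spectral radius of each `Q_k`
(obtained by deleting the `k`-th row and column of
`(P_k)_{i,j} = |(U_j ψ_k)_i|²`) equals `1/2`.  Hence the scheme saturates the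
multiple Chernoff bound, since `max_{i ≠ j} |⟨ψ_i, ψ_j⟩|² = 1/2`. -/
theorem stmt16 :
    (∀ i : Fin 4, (UB i).mulVec (ψB i) = Pi.single i 1) ∧
    (∀ k : Fin 4,
      specRad
        (((Matrix.of fun i j : Fin 4 => ‖((UB j).mulVec (ψB k)) i‖ ^ 2
            : Matrix (Fin 4) (Fin 4) ℝ).submatrix
          k.succAbove k.succAbove).map Complex.ofReal) = 1 / 2) := by
  constructor
  · intro i
    fin_cases i <;> rw [keyVT] <;> funext q <;> fin_cases q <;>
      simp [VT, Pi.single_apply, Matrix.vecHead, Matrix.vecTail]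
  · intro k
    fin_cases k
    · exact qcase 0 !![0,0,0;0,1/2,1/2;1,0,1/2]
        (by ext i j; fin_cases i <;> fin_cases j <;>
          simp [keyVT, VT, Fin.succAbove, Fin.lt_def, fv2, fv3, cs0, cs1, cs2, Matrix.vecHead, Matrix.vecTail, habs_sc])
        (fun a => by
          simp [Matrix.det_fin_three, Matrix.smul_apply, Matrix.sub_apply,
            Matrix.one_apply, Matrix.vecHead, Matrix.vecTail]; ring)
    · exact qcase 1 !![0,1/2,0;0,1/2,1/2;0,0,1/2]
        (by ext i j; fin_cases i <;> fin_cases j <;>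
          simp [keyVT, VT, Fin.succAbove, Fin.lt_def, fv2, fv3, cs0, cs1, cs2, Matrix.vecHead, Matrix.vecTail, habs_sc])
        (fun a => by
          simp [Matrix.det_fin_three, Matrix.smul_apply, Matrix.sub_apply,
            Matrix.one_apply, Matrix.vecHead, Matrix.vecTail]; ring)
    · exact qcase 2 !![1/2,0,0;1/2,1/2,0;0,1/2,0]
        (by ext i j; fin_cases i <;> fin_cases j <;>
          simp [keyVT, VT, Fin.succAbove, Fin.lt_def, fv2, fv3, cs0, cs1, cs2, Matrix.vecHead, Matrix.vecTail, habs_sc])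
        (fun a => by
          simp [Matrix.det_fin_three, Matrix.smul_apply, Matrix.sub_apply,
            Matrix.one_apply, Matrix.vecHead, Matrix.vecTail]; ring)
    · exact qcase 3 !![1/2,0,1;1/2,1/2,0;0,0,0]
        (by ext i j; fin_cases i <;> fin_cases j <;>
          simp [keyVT, VT, Fin.succAbove, Fin.lt_def, fv2, fv3, cs0, cs1, cs2, Matrix.vecHead, Matrix.vecTail, habs_sc])
        (fun a => by
          simp [Matrix.det_fin_three, Matrix.smul_apply, Matrix.sub_apply,
            Matrix.one_apply, Matrix.vecHead, Matrix.vecTail]; ring)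
end
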